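/- arXiv:2604.22159 — 2 statements merged into one kernel-verified Lean document; each statement's English description precedes it below -/
import Mathlib

section
/- Let L, M be block lower triangular matrices in ℝ^{Nd×Nd} satisfying the martingale condition: L_{t,t} = L_{t+1,t} = ⋯ = L_{N,t} and M_{t,t} = M_{t+1,t} = ⋯ = M_{N,t} for each t. Then dist_AW²(L, M) = ∑_{t=1}^N (N − t + 1) · dist_BW²(L_{t,t} L_{t,t}ᵀ, M_{t,t} M_{t,t}ᵀ). -/
open Matrix BigOperators Classical

/-- Squared Frobenius norm. -/
def frobSq {m n : Type*} [Fintype m] [Fintype n] (C : Matrix m n ℝ) : ℝ :=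
  ∑ i, ∑ j, (C i j) ^ 2

/-- Frobenius norm. -/
noncomputable def frobNorm {m n : Type*} [Fintype m] [Fintype n]
    (C : Matrix m n ℝ) : ℝ :=
  Real.sqrt (frobSq C)

/-- Square root of a positive semidefinite matrix (junk value `0` otherwise). -/
noncomputable def psdSqrt {n : Type*} [Fintype n] [DecidableEq n]
    (A : Matrix n n ℝ) : Matrix n n ℝ :=
  if h : A.PosSemidef then
    (h.1.eigenvectorUnitary : Matrix n n ℝ) *
      diagonal ((↑) ∘ (√·) ∘ h.1.eigenvalues) *
      (star h.1.eigenvectorUnitary : Matrix n n ℝ)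
  else 0

/-- Nuclear norm: `‖C‖₊ = tr((CᵀC)^{1/2})`, the sum of the singular values. -/
noncomputable def nuclearNorm {m n : Type*} [Fintype m] [Fintype n] [DecidableEq n]
    (C : Matrix m n ℝ) : ℝ :=
  (psdSqrt (Cᵀ * C)).trace

/-- Squared Bures–Wasserstein distance:
`dist_BW²(A,B) = tr A + tr B − 2 tr((A^{1/2} B A^{1/2})^{1/2})`. -/
noncomputable def distBWsq {n : Type*} [Fintype n] [DecidableEq n]
    (A B : Matrix n n ℝ) : ℝ :=
  A.trace + B.trace - 2 * (psdSqrt (psdSqrt A * B * psdSqrt A)).trace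

variable {N d : ℕ}

/-- `L` is block lower triangular: all `d×d` blocks `L_{s,t}` with `s < t` vanish. -/
def BlockLowerTri (L : Matrix (Fin N × Fin d) (Fin N × Fin d) ℝ) : Prop :=
  ∀ s t : Fin N, s < t → ∀ i j : Fin d, L (s, i) (t, j) = 0

/-- The `t`-th `d×d` diagonal block of a matrix. -/
def diagBlock (A : Matrix (Fin N × Fin d) (Fin N × Fin d) ℝ) (t : Fin N) :
    Matrix (Fin d) (Fin d) ℝ :=
  fun i j => A (t, i) (t, j)

/-- The `t`-th column block `L_{·,t} ∈ ℝ^{Nd×d}` of `L`. -/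
def colBlock (L : Matrix (Fin N × Fin d) (Fin N × Fin d) ℝ) (t : Fin N) :
    Matrix (Fin N × Fin d) (Fin d) ℝ :=
  fun p j => L p (t, j)

/-- Block diagonal matrix built from `d×d` blocks `Q₁, …, Q_N`. -/
def blockDiag (Q : Fin N → Matrix (Fin d) (Fin d) ℝ) :
    Matrix (Fin N × Fin d) (Fin N × Fin d) ℝ :=
  fun p q => if p.1 = q.1 then Q q.1 p.2 q.2 else 0

/-- Squared adapted Wasserstein pseudo-distance between Cholesky factors:
`dist_AW²(L,M) = ‖L‖_F² + ‖M‖_F² − 2 ∑_t ‖(LᵀM)_{t,t}‖₊`. -/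
noncomputable def distAWsq (L M : Matrix (Fin N × Fin d) (Fin N × Fin d) ℝ) : ℝ :=
  frobSq L + frobSq M - 2 * ∑ t : Fin N, nuclearNorm (diagBlock (Lᵀ * M) t)

/-- Adapted Wasserstein pseudo-distance. -/
noncomputable def distAW (L M : Matrix (Fin N × Fin d) (Fin N × Fin d) ℝ) : ℝ :=
  Real.sqrt (distAWsq L M)

/-- The martingale condition: all blocks in a column below the diagonal agree
with the diagonal block, `L_{s,t} = L_{t,t}` for `s ≥ t`. -/
def MartingaleCond (L : Matrix (Fin N × Fin d) (Fin N × Fin d) ℝ) : Prop :=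
  ∀ s t : Fin N, t ≤ s → ∀ i j : Fin d, L (s, i) (t, j) = L (t, i) (t, j)

/-! Under the martingale condition the `t`-th column block of `L` consists of zero blocks
above the diagonal and `N - t` copies of `L_{t,t}` from the diagonal down (`t` is 0-indexed), so
`‖L‖_F² = ∑ₜ (N - t) ‖L_{t,t}‖_F²` and `(LᵀM)_{t,t} = (N - t) L_{t,t}ᵀ M_{t,t}`. It remains to
see `dist_BW²(PPᵀ, QQᵀ) = ‖P‖_F² + ‖Q‖_F² - 2 ‖PᵀQ‖₊`: for `S = (PPᵀ)^{1/2}` we have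
`S QQᵀ S = (SQ)(SQ)ᵀ` and `(SQ)ᵀ(SQ) = (PᵀQ)ᵀ(PᵀQ)`, and `tr (XXᵀ)^{1/2} = tr (XᵀX)^{1/2}`
because `XXᵀ` and `XᵀX` have the same characteristic polynomial up to a power of `X`. -/

open scoped MatrixOrder
open Polynomial

section PsdSqrt
variable {n : Type*} [Fintype n] [DecidableEq n]

theorem psdSqrt_eq_cfcSqrt (A : Matrix n n ℝ) : psdSqrt A = CFC.sqrt A := by
  by_cases hA : A.PosSemidef
  · rw [psdSqrt, dif_pos hA, CFC.sqrt_eq_cfc, cfc_nnreal_eq_real _ A, hA.1.cfc_eq,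
      IsHermitian.cfc, Unitary.conjStarAlgAut_apply]
    congr 3
    funext i
    simp [Real.coe_sqrt, Real.coe_toNNReal', hA.eigenvalues_nonneg i]
  · rw [psdSqrt, dif_neg hA, CFC.sqrt_of_not_nonneg (mt LE.le.posSemidef hA)]

theorem trace_psdSqrt {A : Matrix n n ℝ} (hA : A.PosSemidef) :
    (psdSqrt A).trace = ∑ i, √(hA.1.eigenvalues i) := by
  rw [psdSqrt, dif_pos hA, trace_mul_cycle, Unitary.coe_star_mul_self, one_mul, trace_diagonal]
  rfl

theorem trace_psdSqrt_eq_sum_sqrt_roots {A : Matrix n n ℝ} (hA : A.PosSemidef) :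
    (psdSqrt A).trace = (A.charpoly.roots.map Real.sqrt).sum := by
  rw [trace_psdSqrt hA, hA.1.roots_charpoly_eq_eigenvalues, Multiset.map_map]
  rfl

theorem psdSqrt_mul_self {A : Matrix n n ℝ} (hA : A.PosSemidef) : psdSqrt A * psdSqrt A = A := by
  rw [psdSqrt_eq_cfcSqrt]; exact CFC.sqrt_mul_sqrt_self A hA.nonneg

theorem transpose_psdSqrt (A : Matrix n n ℝ) : (psdSqrt A)ᵀ = psdSqrt A := by
  rw [psdSqrt_eq_cfcSqrt, ← conjTranspose_eq_transpose_of_trivial]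
  exact (CFC.sqrt_nonneg A).posSemidef.1

theorem psdSqrt_smul {A : Matrix n n ℝ} (hA : A.PosSemidef) {c : ℝ} (hc : 0 ≤ c) :
    psdSqrt ((c * c) • A) = c • psdSqrt A := by
  simp only [psdSqrt_eq_cfcSqrt]
  refine CFC.sqrt_unique ?_ (smul_nonneg hc (CFC.sqrt_nonneg A))
  rw [smul_mul_smul, CFC.sqrt_mul_sqrt_self A hA.nonneg]

end PsdSqrt

theorem sum_sqrt_roots_X_pow_mul {p : ℝ[X]} (hp : p ≠ 0) (k : ℕ) :
    ((X ^ k * p).roots.map Real.sqrt).sum = (p.roots.map Real.sqrt).sum := by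
  rw [roots_mul (mul_ne_zero (pow_ne_zero k X_ne_zero) hp), roots_X_pow]
  simp [Multiset.map_nsmul, Multiset.sum_nsmul]

section NuclearNorm
variable {m n k : Type*} [Fintype m] [Fintype n] [Fintype k] [DecidableEq n]

theorem nuclearNorm_transpose [DecidableEq m] (C : Matrix m n ℝ) :
    nuclearNorm Cᵀ = nuclearNorm C := by
  have hCCt : (C * Cᵀ).PosSemidef := by
    simpa using posSemidef_self_mul_conjTranspose C
  have hCtC : (Cᵀ * C).PosSemidef := by
    simpa using posSemidef_conjTranspose_mul_self C
  rw [nuclearNorm, nuclearNorm, transpose_transpose, trace_psdSqrt_eq_sum_sqrt_roots hCCt,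
    trace_psdSqrt_eq_sum_sqrt_roots hCtC,
    ← sum_sqrt_roots_X_pow_mul (C * Cᵀ).charpoly_monic.ne_zero (Fintype.card n),
    ← sum_sqrt_roots_X_pow_mul (Cᵀ * C).charpoly_monic.ne_zero (Fintype.card m),
    charpoly_mul_comm']

theorem nuclearNorm_smul (C : Matrix m n ℝ) {c : ℝ} (hc : 0 ≤ c) :
    nuclearNorm (c • C) = c * nuclearNorm C := by
  have hCtC : (Cᵀ * C).PosSemidef := by
    simpa using posSemidef_conjTranspose_mul_self C
  rw [nuclearNorm, transpose_smul, Matrix.smul_mul, Matrix.mul_smul, smul_smul,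
    psdSqrt_smul hCtC hc, trace_smul, smul_eq_mul, nuclearNorm]

omit [DecidableEq n] in
theorem trace_mul_transpose_self_eq_frobSq (P : Matrix n m ℝ) : (P * Pᵀ).trace = frobSq P := by
  simp [Matrix.trace, Matrix.mul_apply, frobSq, pow_two]

theorem distBWsq_mul_transpose [DecidableEq k] (P : Matrix n m ℝ) (Q : Matrix n k ℝ) :
    distBWsq (P * Pᵀ) (Q * Qᵀ) = frobSq P + frobSq Q - 2 * nuclearNorm (Pᵀ * Q) := by
  have hP : (P * Pᵀ).PosSemidef := by simpa using posSemidef_self_mul_conjTranspose P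
  set S := psdSqrt (P * Pᵀ)
  have hSt : Sᵀ = S := transpose_psdSqrt _
  have hSS : S * S = P * Pᵀ := psdSqrt_mul_self hP
  have hSQ : S * (Q * Qᵀ) * S = (S * Q) * (S * Q)ᵀ := by
    rw [transpose_mul, hSt]; simp only [Matrix.mul_assoc]
  have hSQ' : (S * Q)ᵀ * (S * Q) = (Pᵀ * Q)ᵀ * (Pᵀ * Q) := by
    rw [transpose_mul, hSt, transpose_mul, transpose_transpose, Matrix.mul_assoc,
      ← Matrix.mul_assoc S, hSS]
    simp only [Matrix.mul_assoc]
  have hnuc : (psdSqrt (S * (Q * Qᵀ) * S)).trace = nuclearNorm (Pᵀ * Q) :=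
    calc (psdSqrt (S * (Q * Qᵀ) * S)).trace = nuclearNorm (S * Q)ᵀ := by
          rw [hSQ, nuclearNorm, transpose_transpose]
      _ = nuclearNorm (S * Q) := nuclearNorm_transpose _
      _ = nuclearNorm (Pᵀ * Q) := by simp only [nuclearNorm, hSQ']
  rw [distBWsq, hnuc, trace_mul_transpose_self_eq_frobSq, trace_mul_transpose_self_eq_frobSq]

end NuclearNorm

theorem Fin.sum_ite_le {R : Type*} [NonAssocSemiring R] {N : ℕ} (t : Fin N) (x : R) :
    (∑ s : Fin N, if t ≤ s then x else 0) = ((N - t : ℕ) : R) * x := by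
  rw [← Finset.sum_filter, Finset.filter_le_eq_Ici, Finset.sum_const, Fin.card_Ici, nsmul_eq_mul]

section Blocks
variable {L M : Matrix (Fin N × Fin d) (Fin N × Fin d) ℝ}

theorem MartingaleCond.apply_eq_ite (hL : BlockLowerTri L) (hLmart : MartingaleCond L)
    (s t : Fin N) (i j : Fin d) : L (s, i) (t, j) = if t ≤ s then diagBlock L t i j else 0 := by
  split_ifs with hts
  · exact hLmart s t hts i j
  · exact hL s t (not_le.mp hts) i j

theorem MartingaleCond.frobSq_eq_sum_diagBlock (hL : BlockLowerTri L)
    (hLmart : MartingaleCond L) :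
    frobSq L = ∑ t : Fin N, ((N - t : ℕ) : ℝ) * frobSq (diagBlock L t) := by
  calc frobSq L = ∑ s : Fin N, ∑ t : Fin N, ∑ i, ∑ j, L (s, i) (t, j) ^ 2 := by
        simp only [frobSq, Fintype.sum_prod_type]
        exact Finset.sum_congr rfl fun s _ => Finset.sum_comm
    _ = ∑ t : Fin N, ∑ s : Fin N, ∑ i, ∑ j, L (s, i) (t, j) ^ 2 := Finset.sum_comm
    _ = ∑ t : Fin N, ∑ s : Fin N, if t ≤ s then frobSq (diagBlock L t) else 0 := by
        refine Finset.sum_congr rfl fun t _ => Finset.sum_congr rfl fun s _ => ?_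
        simp_rw [hLmart.apply_eq_ite hL s t]
        split_ifs <;> simp [frobSq]
    _ = _ := by simp only [Fin.sum_ite_le]

theorem MartingaleCond.diagBlock_transpose_mul (hL : BlockLowerTri L) (hLmart : MartingaleCond L)
    (hM : BlockLowerTri M) (hMmart : MartingaleCond M) (t : Fin N) :
    diagBlock (Lᵀ * M) t = ((N - t : ℕ) : ℝ) • ((diagBlock L t)ᵀ * diagBlock M t) := by
  ext i j
  calc diagBlock (Lᵀ * M) t i j
      = ∑ s : Fin N, if t ≤ s then ((diagBlock L t)ᵀ * diagBlock M t) i j else 0 := by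
        rw [diagBlock, mul_apply, Fintype.sum_prod_type]
        refine Finset.sum_congr rfl fun s _ => ?_
        simp_rw [transpose_apply, hLmart.apply_eq_ite hL s t, hMmart.apply_eq_ite hM s t]
        split_ifs <;> simp [mul_apply]
    _ = _ := by rw [Fin.sum_ite_le, Matrix.smul_apply, smul_eq_mul]

end Blocks

/-- `dist_AW` between Gaussian martingales:
`dist_AW²(L,M) = ∑_t (N − t + 1) dist_BW²(L_{t,t}L_{t,t}ᵀ, M_{t,t}M_{t,t}ᵀ)`. -/
theorem distAWsq_martingale (N d : ℕ)
    (L M : Matrix (Fin N × Fin d) (Fin N × Fin d) ℝ)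
    (hL : BlockLowerTri L) (hM : BlockLowerTri M)
    (hLmart : MartingaleCond L) (hMmart : MartingaleCond M) :
    distAWsq L M = ∑ t : Fin N, ((N - (t : ℕ) : ℕ) : ℝ) *
      distBWsq (diagBlock L t * (diagBlock L t)ᵀ)
        (diagBlock M t * (diagBlock M t)ᵀ) := by
  have hnuc (t : Fin N) : nuclearNorm (diagBlock (Lᵀ * M) t) =
      ((N - t : ℕ) : ℝ) * nuclearNorm ((diagBlock L t)ᵀ * diagBlock M t) := by
    rw [hLmart.diagBlock_transpose_mul hL hM hMmart, nuclearNorm_smul _ (Nat.cast_nonneg _)]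
  simp only [distAWsq, distBWsq_mul_transpose, hLmart.frobSq_eq_sum_diagBlock hL,
    hMmart.frobSq_eq_sum_diagBlock hM, hnuc, Finset.mul_sum, ← Finset.sum_add_distrib,
    ← Finset.sum_sub_distrib]
  exact Finset.sum_congr rfl fun t _ => by ring
end

section
/- Let L ∈ ℝ^{Nd×Nd} be block lower triangular and let 𝒦 be the set of block lower triangular M satisfying the martingale condition M_{t,t} = M_{t+1,t} = ⋯ = M_{N,t} for all t. Then M̂ ∈ 𝒦 minimizes dist_AW(L, M) over M ∈ 𝒦 if and only if M̂_{t,t} = ( (1/(N−t+1)) ∑_{s=t}^N L_{s,t} ) Q_t for some orthogonal matrices Q_t ∈ O(d), t = 1,…,N (with the remaining blocks determined by the martingale condition). -/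
open Matrix BigOperators Classical

variable {N d : ℕ}

/-!
If `M` is block lower triangular and satisfies the martingale condition, its `t`-th block column
is its diagonal block `X_t` repeated `N - t` times (0-based `t`), so
`dist_AW²(L, M) = ‖L‖² + ∑_t (n_t ‖X_t‖² - 2 ‖A_tᵀ X_t‖₊)` with `n_t = N - t` and
`A_t = ∑_{s ≥ t} L_{s,t}`: the minimization decouples over `t`. By the singular value
decomposition there is an orthogonal `Q` with `tr (AᵀX Q) = ‖AᵀX‖₊`, and completing the square gives
`n ‖X‖² - 2 ‖AᵀX‖₊ = n ‖X - n⁻¹ A Qᵀ‖² - ‖A‖² / n`. Hence each summand is at least `-‖A_t‖² / n_t`,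
with equality exactly when `X_t = n_t⁻¹ A_t Q` for an orthogonal `Q`. The case `n = 1` of the
same identity shows `dist_AW² ≥ 0`, so comparing `dist_AW` is the same as comparing `dist_AW²`.
-/

section Frobenius

variable {m n : Type*} [Fintype m] [Fintype n]

lemma frobSq_nonneg (C : Matrix m n ℝ) : 0 ≤ frobSq C :=
  Finset.sum_nonneg fun _ _ => Finset.sum_nonneg fun _ _ => sq_nonneg _

lemma eq_zero_of_frobSq_eq_zero {C : Matrix m n ℝ} (h : frobSq C = 0) : C = 0 := by
  ext i j
  have hrows := (Fintype.sum_eq_zero_iff_of_nonneg fun i =>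
    Finset.sum_nonneg fun j _ => sq_nonneg (C i j)).1 h
  have hrow := (Fintype.sum_eq_zero_iff_of_nonneg fun j => sq_nonneg (C i j)).1 (congrFun hrows i)
  simpa using congrFun hrow j

lemma trace_transpose_mul_eq_sum (X Y : Matrix m n ℝ) :
    (Xᵀ * Y).trace = ∑ i, ∑ j, X i j * Y i j := by
  simp only [trace, diag_apply, mul_apply, transpose_apply]
  exact Finset.sum_comm

lemma frobSq_eq_trace (X : Matrix m n ℝ) : frobSq X = (Xᵀ * X).trace := by
  simp only [trace_transpose_mul_eq_sum, frobSq, sq]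

lemma frobSq_sub (X Y : Matrix m n ℝ) :
    frobSq (X - Y) = frobSq X - 2 * (Xᵀ * Y).trace + frobSq Y := by
  simp only [frobSq, trace_transpose_mul_eq_sum, Matrix.sub_apply, Finset.mul_sum,
    ← Finset.sum_sub_distrib, ← Finset.sum_add_distrib]
  congr! 2
  ring

lemma frobSq_smul (c : ℝ) (X : Matrix m n ℝ) : frobSq (c • X) = c ^ 2 * frobSq X := by
  simp only [frobSq, Matrix.smul_apply, smul_eq_mul, mul_pow, Finset.mul_sum]

lemma frobSq_mul_orthogonal [DecidableEq n] (X : Matrix m n ℝ) {Q : Matrix n n ℝ}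
    (hQ : Qᵀ * Q = 1) : frobSq (X * Q) = frobSq X := by
  rw [frobSq_eq_trace, frobSq_eq_trace, transpose_mul,
    show Qᵀ * Xᵀ * (X * Q) = Qᵀ * (Xᵀ * X) * Q by simp only [Matrix.mul_assoc], trace_mul_cycle,
    mul_eq_one_comm.mp hQ, one_mul]

lemma posSemidef_transpose_mul_self (C : Matrix m n ℝ) : (Cᵀ * C).PosSemidef := by
  simpa [conjTranspose_eq_transpose_of_trivial] using posSemidef_conjTranspose_mul_self C

end Frobenius

section Nuclear

variable {n : Type*} [Fintype n] [DecidableEq n]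

lemma psdSqrt_eq_of_mul_self {A B : Matrix n n ℝ} (hA : A.PosSemidef) (hB : B.PosSemidef)
    (h : B * B = A) : psdSqrt A = B := by
  open scoped MatrixOrder in
  rw [psdSqrt, dif_pos hA, ← CFC.sqrt_unique h hB.nonneg, CFC.sqrt_eq_cfc,
    cfc_nnreal_eq_real _ A hA.nonneg, hA.1.cfc_eq, IsHermitian.cfc, Unitary.conjStarAlgAut_apply]
  congr 3
  funext i
  simp [Real.coe_toNNReal', max_eq_left (hA.eigenvalues_nonneg i)]

lemma nuclearNorm_orthogonal_mul_mul_orthogonal {U P V : Matrix n n ℝ} (hU : Uᵀ * U = 1)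
    (hP : P.PosSemidef) (hV : Vᵀ * V = 1) : nuclearNorm (U * P * V) = P.trace := by
  have hPt : Pᵀ = P := by simpa [IsHermitian, conjTranspose_eq_transpose_of_trivial] using hP.1
  have hVPV : (Vᵀ * P * V).PosSemidef := by
    simpa [conjTranspose_eq_transpose_of_trivial] using hP.conjTranspose_mul_mul_same V
  have hsq : (Vᵀ * P * V) * (Vᵀ * P * V) = (U * P * V)ᵀ * (U * P * V) := by
    calc (Vᵀ * P * V) * (Vᵀ * P * V) = Vᵀ * P * (V * Vᵀ) * P * V := by noncomm_ring
      _ = Vᵀ * P * (Uᵀ * U) * P * V := by rw [mul_eq_one_comm.mp hV, hU]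
      _ = (U * P * V)ᵀ * (U * P * V) := by simp only [transpose_mul, hPt]; noncomm_ring
  rw [nuclearNorm, psdSqrt_eq_of_mul_self (posSemidef_transpose_mul_self _) hVPV hsq,
    trace_mul_cycle, mul_eq_one_comm.mp hV, one_mul]

end Nuclear

section SingularValueDecomposition

variable {n : Type*} [Fintype n] [DecidableEq n]

lemma exists_orthogonal_mul_diagonal_eq {B : Matrix n n ℝ} {σ : n → ℝ}
    (hB : Bᵀ * B = diagonal fun i => σ i ^ 2) :
    ∃ U : Matrix n n ℝ, Uᵀ * U = 1 ∧ B = U * diagonal σ := by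
  -- The columns `i` with `σ i ≠ 0`, rescaled by `(σ i)⁻¹`, are orthonormal; extend them to a basis.
  have hcol : ∀ i j, ∑ k, B k i * B k j = if i = j then σ i ^ 2 else 0 := fun i j => by
    simpa [mul_apply, diagonal_apply] using congrFun (congrFun hB i) j
  let v : n → EuclideanSpace ℝ n := fun i => (σ i)⁻¹ • WithLp.toLp 2 fun k => B k i
  have hv : Orthonormal ℝ (Set.domRestrict {i | σ i ≠ 0} v) := by
    rw [orthonormal_iff_ite]
    rintro ⟨i, hi : σ i ≠ 0⟩ ⟨j, -⟩
    have hij : ∑ k, B k j * B k i = if i = j then σ i ^ 2 else 0 := by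
      rw [← hcol]; exact Finset.sum_congr rfl fun k _ => mul_comm _ _
    change inner ℝ (v i) (v j) = if (⟨i, _⟩ : {i | σ i ≠ 0}) = ⟨j, _⟩ then 1 else 0
    simp only [Subtype.mk.injEq, v, real_inner_smul_left, real_inner_smul_right,
      EuclideanSpace.inner_toLp_toLp, dotProduct, star_trivial, hij]
    split_ifs with h
    · subst h; field_simp [hi]
    · simp
  obtain ⟨u, hu⟩ := hv.exists_orthonormalBasis_extension_of_card_eq (by simp)
  refine ⟨(EuclideanSpace.basisFun n ℝ).toBasis.toMatrix u, ?_, ?_⟩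
  · simpa [conjTranspose_eq_transpose_of_trivial] using
      (EuclideanSpace.basisFun n ℝ).toMatrix_orthonormalBasis_conjTranspose_mul_self u
  · ext k i
    rw [mul_diagonal]
    by_cases hi : σ i = 0
    · have hsq : ∑ k, B k i * B k i = 0 := by simp [hcol, hi]
      rw [hi, mul_zero]
      exact mul_self_eq_zero.mp
        ((Finset.sum_eq_zero_iff_of_nonneg fun k _ => mul_self_nonneg _).1 hsq k (by simp))
    · rw [Module.Basis.toMatrix_apply, hu i hi]
      simp only [v, map_smul, Finsupp.coe_smul, Pi.smul_apply,
        OrthonormalBasis.coe_toBasis_repr_apply, EuclideanSpace.basisFun_repr, smul_eq_mul]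
      field_simp

lemma Matrix.PosSemidef.exists_orthogonal_diagonalization {A : Matrix n n ℝ} (hA : A.PosSemidef) :
    ∃ V : Matrix n n ℝ, ∃ μ : n → ℝ, Vᵀ * V = 1 ∧ (∀ i, 0 ≤ μ i) ∧ A = V * diagonal μ * Vᵀ := by
  refine ⟨hA.1.eigenvectorUnitary, hA.1.eigenvalues, ?_, hA.eigenvalues_nonneg, ?_⟩
  · simpa [conjTranspose_eq_transpose_of_trivial, star_eq_conjTranspose] using
      Matrix.mem_unitaryGroup_iff'.mp hA.1.eigenvectorUnitary.2
  · simpa [star_eq_conjTranspose, conjTranspose_eq_transpose_of_trivial] using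
      hA.1.spectral_theorem

lemma exists_svd (C : Matrix n n ℝ) :
    ∃ U V : Matrix n n ℝ, ∃ σ : n → ℝ, Uᵀ * U = 1 ∧ Vᵀ * V = 1 ∧ (∀ i, 0 ≤ σ i) ∧
      C = U * diagonal σ * Vᵀ := by
  obtain ⟨V, μ, hV, hμ, hspec⟩ :=
    (posSemidef_transpose_mul_self C).exists_orthogonal_diagonalization
  have hCV : (C * V)ᵀ * (C * V) = diagonal fun i => √(μ i) ^ 2 := by
    simp only [Real.sq_sqrt (hμ _)]
    calc (C * V)ᵀ * (C * V) = Vᵀ * (Cᵀ * C) * V := by simp only [transpose_mul, Matrix.mul_assoc]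
      _ = (Vᵀ * V) * diagonal μ * (Vᵀ * V) := by rw [hspec]; simp only [Matrix.mul_assoc]
      _ = diagonal μ := by rw [hV, Matrix.one_mul, Matrix.mul_one]
  obtain ⟨U, hU, hUσ⟩ := exists_orthogonal_mul_diagonal_eq hCV
  refine ⟨U, V, fun i => √(μ i), hU, hV, fun i => Real.sqrt_nonneg _, ?_⟩
  rw [← hUσ, Matrix.mul_assoc, mul_eq_one_comm.mp hV, Matrix.mul_one]

lemma exists_orthogonal_trace_mul_eq_nuclearNorm (C : Matrix n n ℝ) :
    ∃ Q : Matrix n n ℝ, Qᵀ * Q = 1 ∧ (C * Q).trace = nuclearNorm C := by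
  obtain ⟨U, V, σ, hU, hV, hσ, rfl⟩ := exists_svd C
  refine ⟨V * Uᵀ, ?_, ?_⟩
  · rw [transpose_mul, transpose_transpose,
      show U * Vᵀ * (V * Uᵀ) = U * (Vᵀ * V) * Uᵀ by simp only [Matrix.mul_assoc], hV,
      Matrix.mul_one, mul_eq_one_comm.mp hU]
  · have hVt : (Vᵀ)ᵀ * Vᵀ = 1 := by rw [transpose_transpose, mul_eq_one_comm.mp hV]
    rw [nuclearNorm_orthogonal_mul_mul_orthogonal hU (PosSemidef.diagonal hσ) hVt,
      show U * diagonal σ * Vᵀ * (V * Uᵀ) = U * diagonal σ * (Vᵀ * V) * Uᵀ by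
        simp only [Matrix.mul_assoc], hV, Matrix.mul_one, trace_mul_cycle,
      hU, Matrix.one_mul]

end SingularValueDecomposition

section ProcrustesCost

variable {m n : Type*} [Fintype m] [Fintype n] [DecidableEq n]

noncomputable def procrustesCost (w : ℝ) (A X : Matrix m n ℝ) : ℝ :=
  w * frobSq X - 2 * nuclearNorm (Aᵀ * X)

lemma procrustesCost_eq_frobSq_sub {w : ℝ} (hw : w ≠ 0) (A X : Matrix m n ℝ) {Q : Matrix n n ℝ}
    (hQ : Qᵀ * Q = 1) (hQA : (Aᵀ * X * Q).trace = nuclearNorm (Aᵀ * X)) :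
    procrustesCost w A X = w * frobSq (X - w⁻¹ • (A * Qᵀ)) - frobSq A / w := by
  have hcross : (Xᵀ * (A * Qᵀ)).trace = nuclearNorm (Aᵀ * X) := by
    rw [← hQA, show Xᵀ * (A * Qᵀ) = (Q * (Aᵀ * X))ᵀ by simp [transpose_mul, Matrix.mul_assoc],
      trace_transpose, trace_mul_comm]
  have hQt : (Qᵀ)ᵀ * Qᵀ = 1 := by rw [transpose_transpose, mul_eq_one_comm.mp hQ]
  rw [procrustesCost, frobSq_sub, frobSq_smul, frobSq_mul_orthogonal A hQt, Matrix.mul_smul,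
    trace_smul, hcross, smul_eq_mul]
  field_simp
  ring

lemma neg_frobSq_div_le_procrustesCost {w : ℝ} (hw : 0 < w) (A X : Matrix m n ℝ) :
    -(frobSq A / w) ≤ procrustesCost w A X := by
  obtain ⟨Q, hQ, hQA⟩ := exists_orthogonal_trace_mul_eq_nuclearNorm (Aᵀ * X)
  rw [procrustesCost_eq_frobSq_sub hw.ne' A X hQ hQA]
  nlinarith [frobSq_nonneg (X - w⁻¹ • (A * Qᵀ))]

lemma two_mul_nuclearNorm_le (A X : Matrix m n ℝ) :
    2 * nuclearNorm (Aᵀ * X) ≤ frobSq A + frobSq X := by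
  have h := neg_frobSq_div_le_procrustesCost one_pos A X
  rw [procrustesCost, div_one, one_mul] at h
  linarith

lemma procrustesCost_eq_neg_iff {w : ℝ} (hw : 0 < w) (A X : Matrix m n ℝ) :
    procrustesCost w A X = -(frobSq A / w) ↔
      ∃ Q : Matrix n n ℝ, Qᵀ * Q = 1 ∧ X = (w⁻¹ • A) * Q := by
  constructor
  · intro h
    obtain ⟨Q, hQ, hQA⟩ := exists_orthogonal_trace_mul_eq_nuclearNorm (Aᵀ * X)
    rw [procrustesCost_eq_frobSq_sub hw.ne' A X hQ hQA] at h
    have hzero : frobSq (X - w⁻¹ • (A * Qᵀ)) = 0 := by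
      have : w * frobSq (X - w⁻¹ • (A * Qᵀ)) = 0 := by linarith
      exact (mul_eq_zero.mp this).resolve_left hw.ne'
    refine ⟨Qᵀ, by rw [transpose_transpose, mul_eq_one_comm.mp hQ], ?_⟩
    rw [Matrix.smul_mul, ← sub_eq_zero]
    exact eq_zero_of_frobSq_eq_zero hzero
  · rintro ⟨Q, hQ, rfl⟩
    have hnuc : nuclearNorm (Aᵀ * ((w⁻¹ • A) * Q)) = w⁻¹ * frobSq A := by
      rw [show Aᵀ * ((w⁻¹ • A) * Q) = 1 * (w⁻¹ • (Aᵀ * A)) * Q by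
          simp only [Matrix.smul_mul, Matrix.mul_smul, Matrix.mul_assoc, Matrix.one_mul],
        nuclearNorm_orthogonal_mul_mul_orthogonal (by simp)
          ((posSemidef_transpose_mul_self A).smul (inv_nonneg.mpr hw.le)) hQ,
        trace_smul, smul_eq_mul, frobSq_eq_trace]
    rw [procrustesCost, hnuc, frobSq_mul_orthogonal _ hQ, frobSq_smul]
    field_simp
    ring

end ProcrustesCost

lemma frobSq_eq_sum_colBlock (L : Matrix (Fin N × Fin d) (Fin N × Fin d) ℝ) :
    frobSq L = ∑ t, frobSq (colBlock L t) := by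
  simp only [frobSq, colBlock, Fintype.sum_prod_type (f := fun q : Fin N × Fin d => _ ^ 2)]
  exact Finset.sum_comm

lemma diagBlock_transpose_mul (L M : Matrix (Fin N × Fin d) (Fin N × Fin d) ℝ) (t : Fin N) :
    diagBlock (Lᵀ * M) t = (colBlock L t)ᵀ * colBlock M t :=
  rfl

lemma distAWsq_eq_sum_colBlock (L M : Matrix (Fin N × Fin d) (Fin N × Fin d) ℝ) :
    distAWsq L M = ∑ t, (frobSq (colBlock L t) + frobSq (colBlock M t)
      - 2 * nuclearNorm ((colBlock L t)ᵀ * colBlock M t)) := by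
  simp only [distAWsq, frobSq_eq_sum_colBlock L, frobSq_eq_sum_colBlock M,
    diagBlock_transpose_mul, Finset.mul_sum, ← Finset.sum_add_distrib, ← Finset.sum_sub_distrib]

lemma distAWsq_nonneg (L M : Matrix (Fin N × Fin d) (Fin N × Fin d) ℝ) : 0 ≤ distAWsq L M := by
  rw [distAWsq_eq_sum_colBlock]
  exact Finset.sum_nonneg fun t _ => sub_nonneg.mpr (two_mul_nuclearNorm_le _ _)

section Martingale

noncomputable def colBlockSum (L : Matrix (Fin N × Fin d) (Fin N × Fin d) ℝ) (t : Fin N) :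
    Matrix (Fin d) (Fin d) ℝ :=
  ∑ s ∈ Finset.univ.filter (fun s : Fin N => t ≤ s), Matrix.of fun i j : Fin d => L (s, i) (t, j)

lemma Fin.card_filter_ge_eq_sub (t : Fin N) :
    (Finset.univ.filter fun s : Fin N => t ≤ s).card = N - (t : ℕ) := by
  rw [show Finset.univ.filter (fun s : Fin N => t ≤ s) = Finset.Ici t by ext; simp, Fin.card_Ici]

lemma Fin.natCast_sub_val_pos (t : Fin N) : (0 : ℝ) < ((N - (t : ℕ) : ℕ) : ℝ) := by
  exact_mod_cast Nat.sub_pos_of_lt t.isLt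

variable {M : Matrix (Fin N × Fin d) (Fin N × Fin d) ℝ}

lemma colBlock_apply_of_martingale (hM : BlockLowerTri M) (hMart : MartingaleCond M)
    (t s : Fin N) (i j : Fin d) :
    colBlock M t (s, i) j = if t ≤ s then diagBlock M t i j else 0 := by
  split_ifs with h
  · exact hMart s t h i j
  · exact hM s t (not_le.mp h) i j

lemma frobSq_colBlock_of_martingale (hM : BlockLowerTri M) (hMart : MartingaleCond M)
    (t : Fin N) : frobSq (colBlock M t) = ((N - (t : ℕ) : ℕ) : ℝ) * frobSq (diagBlock M t) := by
  calc frobSq (colBlock M t)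
      = ∑ s ∈ Finset.univ.filter (fun s : Fin N => t ≤ s), frobSq (diagBlock M t) := by
        rw [Finset.sum_filter]
        simp only [frobSq, Fintype.sum_prod_type, colBlock_apply_of_martingale hM hMart]
        refine Finset.sum_congr rfl fun s _ => ?_
        split_ifs <;> simp
    _ = _ := by rw [Finset.sum_const, Fin.card_filter_ge_eq_sub, nsmul_eq_mul]

lemma colBlock_transpose_mul_colBlock_of_martingale (L : Matrix (Fin N × Fin d) (Fin N × Fin d) ℝ)
    (hM : BlockLowerTri M) (hMart : MartingaleCond M) (t : Fin N) :
    (colBlock L t)ᵀ * colBlock M t = (colBlockSum L t)ᵀ * diagBlock M t := by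
  ext i j
  simp only [mul_apply, transpose_apply, Fintype.sum_prod_type,
    colBlock_apply_of_martingale hM hMart, colBlockSum, Matrix.sum_apply, of_apply, Finset.sum_mul]
  rw [Finset.sum_comm]
  refine Finset.sum_congr rfl fun k _ => ?_
  rw [Finset.sum_filter]
  refine Finset.sum_congr rfl fun s _ => ?_
  split_ifs <;> simp [colBlock]

lemma distAWsq_eq_of_martingale (L : Matrix (Fin N × Fin d) (Fin N × Fin d) ℝ)
    (hM : BlockLowerTri M) (hMart : MartingaleCond M) :
    distAWsq L M = frobSq L +
      ∑ t : Fin N, procrustesCost ((N - (t : ℕ) : ℕ) : ℝ) (colBlockSum L t) (diagBlock M t) := by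
  rw [distAWsq_eq_sum_colBlock, frobSq_eq_sum_colBlock L, ← Finset.sum_add_distrib]
  refine Finset.sum_congr rfl fun t _ => ?_
  rw [frobSq_colBlock_of_martingale hM hMart,
    colBlock_transpose_mul_colBlock_of_martingale L hM hMart, procrustesCost]
  ring

end Martingale

section Minimizers

def martingaleOfDiagBlocks (X : Fin N → Matrix (Fin d) (Fin d) ℝ) :
    Matrix (Fin N × Fin d) (Fin N × Fin d) ℝ :=
  Matrix.of fun p q => if q.1 ≤ p.1 then X q.1 p.2 q.2 else 0

variable (X : Fin N → Matrix (Fin d) (Fin d) ℝ)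

lemma blockLowerTri_martingaleOfDiagBlocks : BlockLowerTri (martingaleOfDiagBlocks X) :=
  fun _ _ hst _ _ => if_neg (not_le.mpr hst)

lemma martingaleCond_martingaleOfDiagBlocks : MartingaleCond (martingaleOfDiagBlocks X) :=
  fun _ _ hts _ _ => (if_pos hts).trans (if_pos le_rfl).symm

lemma diagBlock_martingaleOfDiagBlocks (t : Fin N) :
    diagBlock (martingaleOfDiagBlocks X) t = X t := by
  ext
  exact if_pos le_rfl

end Minimizers

lemma forall_distAWsq_le_iff_procrustesCost_eq (L Mhat : Matrix (Fin N × Fin d) (Fin N × Fin d) ℝ)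
    (hMhat : BlockLowerTri Mhat) (hMhatMart : MartingaleCond Mhat) :
    (∀ M, BlockLowerTri M → MartingaleCond M → distAWsq L Mhat ≤ distAWsq L M) ↔
      ∀ t : Fin N, procrustesCost ((N - (t : ℕ) : ℕ) : ℝ) (colBlockSum L t) (diagBlock Mhat t) =
        -(frobSq (colBlockSum L t) / ((N - (t : ℕ) : ℕ) : ℝ)) := by
  have hlower (M : Matrix (Fin N × Fin d) (Fin N × Fin d) ℝ) (t : Fin N) :=
    neg_frobSq_div_le_procrustesCost (Fin.natCast_sub_val_pos t) (colBlockSum L t) (diagBlock M t)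
  constructor
  · intro hmin
    let Xopt (t : Fin N) := ((N - (t : ℕ) : ℕ) : ℝ)⁻¹ • colBlockSum L t
    have hopt := hmin (martingaleOfDiagBlocks Xopt) (blockLowerTri_martingaleOfDiagBlocks _)
      (martingaleCond_martingaleOfDiagBlocks _)
    have hcost_opt (t : Fin N) :
        procrustesCost ((N - (t : ℕ) : ℕ) : ℝ) (colBlockSum L t) (Xopt t) =
          -(frobSq (colBlockSum L t) / ((N - (t : ℕ) : ℕ) : ℝ)) :=
      (procrustesCost_eq_neg_iff (Fin.natCast_sub_val_pos t) _ _).mpr ⟨1, by simp, by simp [Xopt]⟩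
    simp only [distAWsq_eq_of_martingale L hMhat hMhatMart, distAWsq_eq_of_martingale L
      (blockLowerTri_martingaleOfDiagBlocks _) (martingaleCond_martingaleOfDiagBlocks _),
      diagBlock_martingaleOfDiagBlocks, hcost_opt, add_le_add_iff_left] at hopt
    intro t
    exact ((Finset.sum_eq_sum_iff_of_le fun t _ => hlower Mhat t).mp
      (le_antisymm (Finset.sum_le_sum fun t _ => hlower Mhat t) hopt) t (Finset.mem_univ t)).symm
  · intro hcost M hM hMart
    rw [distAWsq_eq_of_martingale L hMhat hMhatMart, distAWsq_eq_of_martingale L hM hMart]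
    simp only [hcost]
    exact add_le_add_right (Finset.sum_le_sum fun t _ => hlower M t) _

theorem martingale_projection_general (N d : ℕ)
    (L Mhat : Matrix (Fin N × Fin d) (Fin N × Fin d) ℝ)
    (hMhat : BlockLowerTri Mhat) (hMhatMart : MartingaleCond Mhat) :
    (∀ M : Matrix (Fin N × Fin d) (Fin N × Fin d) ℝ,
        BlockLowerTri M → MartingaleCond M → distAW L Mhat ≤ distAW L M) ↔
      ∃ Q : Fin N → Matrix (Fin d) (Fin d) ℝ,
        (∀ t, (Q t)ᵀ * Q t = 1) ∧
        ∀ t : Fin N, diagBlock Mhat t =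
          (((N - (t : ℕ) : ℕ) : ℝ)⁻¹ •
            ∑ s ∈ Finset.univ.filter (fun s : Fin N => t ≤ s),
              Matrix.of (fun i j : Fin d => L (s, i) (t, j))) * Q t := by
  simp only [distAW, Real.sqrt_le_sqrt_iff (distAWsq_nonneg _ _)]
  rw [forall_distAWsq_le_iff_procrustesCost_eq L Mhat hMhat hMhatMart]
  simp only [procrustesCost_eq_neg_iff (Fin.natCast_sub_val_pos _), Classical.skolem, forall_and]
  rfl

/-- Characterization of the `dist_AW`-projection of a block lower triangular
matrix `L` onto the set of martingale Cholesky factors: `M̂` is a minimizer iff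
its diagonal blocks are the column-block averages of `L` composed with
arbitrary orthogonal matrices. -/
theorem martingale_projection (N d : ℕ)
    (L Mhat : Matrix (Fin N × Fin d) (Fin N × Fin d) ℝ)
    (hL : BlockLowerTri L)
    (hMhat : BlockLowerTri Mhat) (hMhatMart : MartingaleCond Mhat) :
    (∀ M : Matrix (Fin N × Fin d) (Fin N × Fin d) ℝ,
        BlockLowerTri M → MartingaleCond M → distAW L Mhat ≤ distAW L M) ↔
      ∃ Q : Fin N → Matrix (Fin d) (Fin d) ℝ,
        (∀ t, (Q t)ᵀ * Q t = 1) ∧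
        ∀ t : Fin N, diagBlock Mhat t =
          (((N - (t : ℕ) : ℕ) : ℝ)⁻¹ •
            ∑ s ∈ Finset.univ.filter (fun s : Fin N => t ≤ s),
              Matrix.of (fun i j : Fin d => L (s, i) (t, j))) * Q t :=
  martingale_projection_general N d L Mhat hMhat hMhatMart
end
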